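/- Let U ⊂ R^n be open containing the closed unit ball, and let f : U → R^n be a weakly (1+ε)-quasisymmetric embedding, 0 ≤ ε ≤ 1/20, with f(e_1) = e_1 and f(-e_1) = -e_1. Then for every z with |z| = 1, |f(z) - f(0)| ≥ 5/6. -/

import Mathlib

/-! The weak quasisymmetry condition, applied at `0` with the two reference points `±e₁`
(both at distance `1 = |z|` from `0`), bounds `|f(±e₁) - f 0| ≤ (1 + ε) |f z - f 0|`; since
`f(±e₁) = ±e₁` are `2` apart, the triangle inequality gives `1 ≤ (1 + ε) |f z - f 0|`,
so `|f z - f 0| ≥ 20/21 > 5/6`. -/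

open Metric

def WeaklyQuasisymmetricOn {X Y : Type*} [PseudoMetricSpace X] [PseudoMetricSpace Y]
    (H : ℝ) (f : X → Y) (U : Set X) : Prop :=
  ∀ a ∈ U, ∀ b ∈ U, ∀ c ∈ U, dist a b ≤ dist a c → dist (f a) (f b) ≤ H * dist (f a) (f c)

namespace WeaklyQuasisymmetricOn

section PseudoMetric

variable {X Y : Type*} [PseudoMetricSpace X] [PseudoMetricSpace Y]
  {H : ℝ} {f : X → Y} {U : Set X}

theorem dist_le_two_mul (hf : WeaklyQuasisymmetricOn H f U) {x y₁ y₂ z : X}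
    (hx : x ∈ U) (hy₁ : y₁ ∈ U) (hy₂ : y₂ ∈ U) (hz : z ∈ U)
    (h₁ : dist x y₁ ≤ dist x z) (h₂ : dist x y₂ ≤ dist x z) :
    dist (f y₁) (f y₂) ≤ 2 * H * dist (f x) (f z) :=
  calc dist (f y₁) (f y₂) ≤ dist (f x) (f y₁) + dist (f x) (f y₂) := dist_triangle_left _ _ _
    _ ≤ H * dist (f x) (f z) + H * dist (f x) (f z) :=
      add_le_add (hf x hx y₁ hy₁ z hz h₁) (hf x hx y₂ hy₂ z hz h₂)
    _ = 2 * H * dist (f x) (f z) := by ring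

end PseudoMetric

theorem one_le_mul_dist_of_map_neg {E : Type*} [NormedAddCommGroup E] [NormedSpace ℝ E]
    {H : ℝ} {f : E → E} {U : Set E} (hf : WeaklyQuasisymmetricOn H f U)
    (hball : closedBall (0 : E) 1 ⊆ U) {e z : E} (he : ‖e‖ = 1) (hz : ‖z‖ = 1)
    (hfe : f e = e) (hfne : f (-e) = -e) :
    1 ≤ H * dist (f 0) (f z) := by
  have mem_U : ∀ {y : E}, ‖y‖ ≤ 1 → y ∈ U := fun hy => hball (mem_closedBall_zero_iff.2 hy)
  have dist_zero : ∀ {y : E}, ‖y‖ = 1 → dist 0 y ≤ dist 0 z := fun hy => by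
    rw [dist_zero_left, dist_zero_left, hy, hz]
  have h := hf.dist_le_two_mul (mem_U (by simp)) (mem_U he.le) (mem_U (norm_neg e ▸ he.le))
    (mem_U hz.le) (dist_zero he) (dist_zero (by rwa [norm_neg]))
  have hdist : dist e (-e) = 2 := by
    rw [dist_eq_norm, sub_neg_eq_add, ← two_smul ℝ, norm_smul, he]
    norm_num
  rw [hfe, hfne, hdist] at h
  linarith

end WeaklyQuasisymmetricOn

theorem image_of_sphere_far_from_center_general {n : ℕ} (hn : 0 < n)
    (U : Set (EuclideanSpace ℝ (Fin n)))
    (hball : Metric.closedBall (0 : EuclideanSpace ℝ (Fin n)) 1 ⊆ U)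
    (f : EuclideanSpace ℝ (Fin n) → EuclideanSpace ℝ (Fin n))
    (ε : ℝ) (hε : ε ≤ 1/20)
    (e₁ : EuclideanSpace ℝ (Fin n)) (he₁ : e₁ = EuclideanSpace.single ⟨0, hn⟩ 1)
    (hqs : ∀ a ∈ U, ∀ b ∈ U, ∀ c ∈ U,
      dist a b ≤ dist a c → dist (f a) (f b) ≤ (1 + ε) * dist (f a) (f c))
    (hf1 : f e₁ = e₁) (hf2 : f (-e₁) = -e₁) :
    ∀ z : EuclideanSpace ℝ (Fin n), ‖z‖ = 1 → 5/6 ≤ dist (f z) (f 0) := by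
  intro z hz
  have he : ‖e₁‖ = 1 := by simp [he₁]
  have key : 1 ≤ (1 + ε) * dist (f 0) (f z) :=
    WeaklyQuasisymmetricOn.one_le_mul_dist_of_map_neg hqs hball he hz hf1 hf2
  have hd := dist_nonneg (x := f 0) (y := f z)
  rw [dist_comm]
  nlinarith

/-- If `f` is a weakly `(1+ε)`-quasisymmetric embedding, `0 ≤ ε ≤ 1/20`, on an open set
containing the closed unit ball, fixing `±e₁`, then `|f z - f 0| ≥ 5/6` for every `|z| = 1`. -/
theorem image_of_sphere_far_from_center {n : ℕ} (hn : 0 < n)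
    (U : Set (EuclideanSpace ℝ (Fin n))) (hU : IsOpen U)
    (hball : Metric.closedBall (0 : EuclideanSpace ℝ (Fin n)) 1 ⊆ U)
    (f : EuclideanSpace ℝ (Fin n) → EuclideanSpace ℝ (Fin n))
    (hemb : Topology.IsEmbedding (fun x : U => f x))
    (ε : ℝ) (hε0 : 0 ≤ ε) (hε : ε ≤ 1/20)
    (e₁ : EuclideanSpace ℝ (Fin n)) (he₁ : e₁ = EuclideanSpace.single ⟨0, hn⟩ 1)
    (hqs : ∀ a ∈ U, ∀ b ∈ U, ∀ c ∈ U,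
      dist a b ≤ dist a c → dist (f a) (f b) ≤ (1 + ε) * dist (f a) (f c))
    (hf1 : f e₁ = e₁) (hf2 : f (-e₁) = -e₁) :
    ∀ z : EuclideanSpace ℝ (Fin n), ‖z‖ = 1 → 5/6 ≤ dist (f z) (f 0) :=
  image_of_sphere_far_from_center_general hn U hball f ε hε e₁ he₁ hqs hf1 hf2
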